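/- Let H be a separable Hilbert space and let 𝒞 be a family of closed subspaces of H, identified with the set of projectors {Q_V = I − P_V : V ∈ 𝒞} ⊆ B(H). If 𝒞 has MSAP, then the contact hull of 𝒞⁺ = 𝒞 + P⁺(H) equals the closed convex hull of 𝒞⁺: T(𝒞⁺) = clconv(𝒞⁺). -/

import Mathlib

set_option synthInstance.maxHeartbeats 1000000

open Metric ContinuousLinearMap

noncomputable section

variable {H : Type*} [NormedAddCommGroup H] [InnerProductSpace ℂ H] [CompleteSpace H]

/-- The projector `Q_V = I - P_V` associated to a closed subspace `V`, realized as the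
orthogonal projection onto `Vᗮ` (for closed `V` these coincide). -/
noncomputable def projQ (V : Submodule ℂ H) : H →L[ℂ] H :=
  Vᗮ.subtypeL ∘L Vᗮ.orthogonalProjectionOnto

/-- The Minkowski sum `S⁺ = S + P⁺(H)` of a set of operators with the positive operators. -/
def plusPos (S : Set (H →L[ℂ] H)) : Set (H →L[ℂ] H) :=
  {T | ∃ Q ∈ S, ∃ N : H →L[ℂ] H, N.IsPositive ∧ T = Q + N}

/-- A family of (closed) subspaces has the Minimum Subspace Approximation Property. -/
def MSAP (C : Set (Submodule ℂ H)) : Prop :=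
  ∀ F : Finset H, ∃ V ∈ C, (∑ f ∈ F, infDist f (V : Set H) ^ 2) =
    ⨅ W : C, ∑ f ∈ F, infDist f ((W : Submodule ℂ H) : Set H) ^ 2

/-- The collection of contact half-spaces of a set `E` in `B(H)` with the weak operator
topology: closed half-spaces `{x | φ x ≥ a}` (for a WOT-continuous `ℝ`-linear functional `φ`)
containing `E` and whose boundary hyperplane `{x | φ x = a}` meets `E`. -/
def ContactHalfSpaces (E : Set (H →WOT[ℂ] H)) : Set (Set (H →WOT[ℂ] H)) :=
  {S | ∃ (φ : (H →WOT[ℂ] H) →ₗ[ℝ] ℝ) (a : ℝ), Continuous φ ∧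
    S = {x | a ≤ φ x} ∧ E ⊆ S ∧ ∃ x ∈ E, φ x = a}

/-- The contact hull of `E`: the intersection of all contact half-spaces of `E`
(all of the space if there are none). -/
def contactHull (E : Set (H →WOT[ℂ] H)) : Set (H →WOT[ℂ] H) :=
  ⋂₀ ContactHalfSpaces E


-- ======================= auxiliary material =======================

open RCLike
open scoped InnerProductSpace ComplexConjugate Topology

set_option maxHeartbeats 1000000
set_option linter.unusedSectionVars false

lemma real_smul_wot (r : ℝ) (T : H →WOT[ℂ] H) : r • T = ((r : ℂ) • T) := by
  rw [← smul_one_smul ℂ r T, Complex.real_smul, mul_one]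

instance : ContinuousSMul ℝ (H →WOT[ℂ] H) := by
  constructor
  have : (fun p : ℝ × (H →WOT[ℂ] H) => p.1 • p.2) =
      (fun p : ℝ × (H →WOT[ℂ] H) => ((p.1 : ℂ)) • p.2) := by
    funext p; exact real_smul_wot _ _
  rw [this]
  exact (Complex.continuous_ofReal.comp continuous_fst).smul continuous_snd

lemma real_smul_wot_apply (r : ℝ) (T : H →WOT[ℂ] H) (x : H) :
    (r • T) x = (r : ℂ) • T x := by
  rw [real_smul_wot, ContinuousLinearMapWOT.smul_apply]

lemma re_inner_orthProj (U : Submodule ℂ H) [CompleteSpace U] (x : H) :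
    re ⟪x, (U.orthogonalProjectionOnto x : H)⟫_ℂ = ‖(U.orthogonalProjectionOnto x : H)‖ ^ 2 := by
  have h := Submodule.starProjection_inner_eq_zero x (U.orthogonalProjectionOnto x : H)
    (U.orthogonalProjectionOnto x).2
  rw [inner_sub_left, sub_eq_zero] at h
  rw [h, Submodule.starProjection_apply, inner_self_eq_norm_sq]

lemma projQ_isPositive (V : Submodule ℂ H) : (projQ V).IsPositive := by
  refine ⟨ContinuousLinearMap.isSelfAdjoint_iff_isSymmetric.1 (isSelfAdjoint_starProjection Vᗮ), fun x => ?_⟩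
  rw [reApplyInnerSelf, ← inner_conj_symm, conj_re]
  have : re ⟪x, (projQ V) x⟫_ℂ = ‖(Vᗮ.orthogonalProjectionOnto x : H)‖ ^ 2 :=
    re_inner_orthProj Vᗮ x
  rw [this]
  positivity

lemma re_inner_projQ (V : Submodule ℂ H) (hV : IsClosed (V : Set H)) (f : H) :
    re ⟪f, projQ V f⟫_ℂ = infDist f (V : Set H) ^ 2 := by
  haveI : CompleteSpace V := hV.completeSpace_coe
  have h1 : re ⟪f, projQ V f⟫_ℂ = ‖(Vᗮ.orthogonalProjectionOnto f : H)‖ ^ 2 :=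
    re_inner_orthProj Vᗮ f
  have h2 : (Vᗮ.orthogonalProjectionOnto f : H) = f - V.orthogonalProjectionOnto f :=
    Submodule.starProjection_orthogonal_val (K := V) f
  have h3 : ‖f - (V.orthogonalProjectionOnto f : H)‖ = infDist f (V : Set H) := by
    rw [← Submodule.starProjection_apply, Submodule.starProjection_minimal, infDist_eq_iInf]
    congr 1
    ext v
    rw [dist_eq_norm]
  rw [h1, h2, h3]

lemma isPositive_smul_nonneg {t : ℝ} (ht : 0 ≤ t) {N : H →L[ℂ] H} (hN : N.IsPositive) :
    ((t : ℂ) • N).IsPositive := by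
  constructor
  · rw [← ContinuousLinearMap.isSelfAdjoint_iff_isSymmetric, IsSelfAdjoint, star_smul, hN.isSelfAdjoint.star_eq]
    congr 1
    simp [Complex.conj_ofReal]
  · intro x
    rw [reApplyInnerSelf, ContinuousLinearMap.smul_apply, inner_smul_left, Complex.conj_ofReal,
      ← Complex.real_smul, smul_re]
    exact mul_nonneg ht (hN.2 x)

noncomputable def rkOne (x y : H) : H →L[ℂ] H :=
  (ContinuousLinearMap.toSpanSingleton ℂ x).comp (innerSL ℂ y)

@[simp] lemma rkOne_apply (x y z : H) : rkOne x y z = ⟪y, z⟫_ℂ • x := rfl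

lemma isPositive_rkOne (z : H) : (rkOne z z).IsPositive := by
  constructor
  · intro a b
    simp only [ContinuousLinearMap.coe_coe, rkOne_apply, inner_smul_left, inner_smul_right,
      inner_conj_symm]
    ring
  · intro x
    rw [reApplyInnerSelf, rkOne_apply, inner_smul_left, RCLike.conj_mul]
    rw [← ofReal_pow, ofReal_re]
    positivity

/-- The real-linear functional `T ↦ re ⟪v, T x⟫` on the WOT space. -/
noncomputable def evalRe (x v : H) : (H →WOT[ℂ] H) →ₗ[ℝ] ℝ where
  toFun T := re ⟪v, T x⟫_ℂ
  map_add' T S := by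
    rw [ContinuousLinearMapWOT.add_apply, inner_add_right, map_add]
  map_smul' r T := by
    rw [real_smul_wot_apply, inner_smul_right, RingHom.id_apply, ← Complex.real_smul, smul_re,
      smul_eq_mul]

@[simp] lemma evalRe_apply (x v : H) (T : H →WOT[ℂ] H) : evalRe x v T = re ⟪v, T x⟫_ℂ := rfl

lemma continuous_evalRe (x v : H) : Continuous (evalRe x v) := by
  have h : Continuous fun T : H →WOT[ℂ] H => (innerSL ℂ v) (T x) :=
    ContinuousLinearMapWOT.continuous_dual_apply x (innerSL ℂ v)
  exact RCLike.continuous_re.comp h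

lemma re_inner_real_smul_left (c : ℝ) (v y : H) :
    re ⟪(c : ℂ) • v, y⟫_ℂ = c * re ⟪v, y⟫_ℂ := by
  rw [inner_smul_left, Complex.conj_ofReal, ← Complex.real_smul, smul_re]

/-- Every WOT-continuous real-linear functional has a finite inner-product representation. -/
lemma exists_inner_repr (φ : (H →WOT[ℂ] H) →ₗ[ℝ] ℝ) (hφ : Continuous φ) :
    ∃ (n : ℕ) (u w : Fin n → H),
      ∀ T : H →WOT[ℂ] H, φ T = ∑ i, re ⟪w i, T (u i)⟫_ℂ := by
  classical
  have hne : φ ⁻¹' (Set.Ioo (-1 : ℝ) 1) ∈ 𝓝 (0 : H →WOT[ℂ] H) :=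
    hφ.continuousAt.preimage_mem_nhds (by
      rw [map_zero]; exact isOpen_Ioo.mem_nhds (by constructor <;> norm_num))
  obtain ⟨U, hU, hUsub⟩ := ContinuousLinearMapWOT.hasBasis_seminorms.mem_iff.1 hne
  obtain ⟨s, r, hr, rfl⟩ := (SeminormFamily.basisSets_iff _).1 hU
  set ι := ↥s × Bool with hι
  let xv : ι → H := fun i => i.1.1.1
  let vv : ι → H := fun i => (InnerProductSpace.toDual ℂ H).symm i.1.1.2
  let wv : ι → H := fun i => if i.2 then Complex.I • vv i else vv i
  let L : ι → (H →WOT[ℂ] H) →ₗ[ℝ] ℝ := fun i => evalRe (xv i) (wv i)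
  have hker : ⨅ i, LinearMap.ker (L i) ≤ LinearMap.ker φ := by
    intro T hT
    rw [Submodule.mem_iInf] at hT
    simp only [LinearMap.mem_ker] at hT ⊢
    have hz : ∀ q : H × (H →L[ℂ] ℂ), q ∈ s → q.2 (T q.1) = 0 := by
      intro q hq
      have h1 := hT (⟨q, hq⟩, false)
      have h2 := hT (⟨q, hq⟩, true)
      simp only [L, evalRe_apply, wv, vv, xv, if_true, if_false] at h1 h2
      rw [inner_smul_left, Complex.conj_I] at h2
      have him : (⟪(InnerProductSpace.toDual ℂ H).symm q.2, T q.1⟫_ℂ).im = 0 := by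
        simpa [Complex.mul_re] using h2
      have hre : (⟪(InnerProductSpace.toDual ℂ H).symm q.2, T q.1⟫_ℂ).re = 0 := h1
      have : ⟪(InnerProductSpace.toDual ℂ H).symm q.2, T q.1⟫_ℂ = 0 := Complex.ext hre him
      rwa [InnerProductSpace.toDual_symm_apply] at this
    have hball : ∀ c : ℝ, φ (c • T) ∈ Set.Ioo (-1 : ℝ) 1 := by
      intro c
      apply hUsub
      show c • T ∈ Seminorm.ball _ 0 r
      rw [Seminorm.mem_ball_zero]
      refine lt_of_le_of_lt (Seminorm.finset_sup_apply_le le_rfl ?_) hr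
      intro q hq
      show ‖q.2 ((c • T) q.1)‖ ≤ 0
      rw [real_smul_wot_apply, map_smul, hz q hq, smul_zero, norm_zero]
    by_contra h
    have h2 := hball (2 / φ T)
    rw [map_smul, smul_eq_mul, div_mul_cancel₀ 2 h] at h2
    simp at h2
  have hspan := mem_span_of_iInf_ker_le_ker (𝕜 := ℝ) (L := L) hker
  obtain ⟨c, hc⟩ := (Submodule.mem_span_range_iff_exists_fun ℝ).1 hspan
  set e := (Fintype.equivFin ι).symm
  refine ⟨Fintype.card ι, fun k => xv (e k), fun k => ((c (e k) : ℂ)) • wv (e k), fun T => ?_⟩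
  have hT := LinearMap.congr_fun hc T
  simp only [LinearMap.coe_sum, Finset.sum_apply, LinearMap.smul_apply, smul_eq_mul] at hT
  rw [← hT]
  rw [← Equiv.sum_comp e (fun i => c i * L i T)]
  refine Finset.sum_congr rfl fun k _ => ?_
  rw [re_inner_real_smul_left]
  rfl

lemma re_inv2_mul (z : ℂ) : re ((2⁻¹ : ℂ) * z) = 2⁻¹ * re z := by
  have h : (2⁻¹ : ℂ) = ((2⁻¹ : ℝ) : ℂ) := by norm_num
  rw [h, ← Complex.real_smul, smul_re]

lemma re_ofReal_mul' (r : ℝ) (z : ℂ) : re ((r : ℂ) * z) = r * re z := by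
  rw [← Complex.real_smul, smul_re]

lemma re_half_conj (z : ℂ) : re ((2⁻¹ : ℂ) * z + (2⁻¹ : ℂ) * conj z) = re z := by
  rw [map_add, re_inv2_mul, re_inv2_mul, conj_re]; ring

/-- Diagonalization of the functional on self-adjoint operators. -/
lemma exists_diag {ι : Type*} [Fintype ι] (u w : ι → H)
    (hpos : ∀ N : H →L[ℂ] H, N.IsPositive → 0 ≤ ∑ i, re ⟪w i, N (u i)⟫_ℂ) :
    ∃ (m : ℕ) (μ : Fin m → ℝ) (e : Fin m → H), (∀ k, 0 ≤ μ k) ∧ Orthonormal ℂ e ∧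
      ∀ T : H →L[ℂ] H, IsSelfAdjoint T →
        ∑ i, re ⟪w i, T (u i)⟫_ℂ = ∑ k, μ k * re ⟪e k, T (e k)⟫_ℂ := by
  classical
  set M := Submodule.span ℂ (Set.range u ∪ Set.range w) with hMdef
  haveI : FiniteDimensional ℂ M :=
    FiniteDimensional.span_of_finite ℂ ((Set.finite_range u).union (Set.finite_range w))
  have hu : ∀ i, u i ∈ M := fun i => Submodule.subset_span (Or.inl ⟨i, rfl⟩)
  have hw : ∀ i, w i ∈ M := fun i => Submodule.subset_span (Or.inr ⟨i, rfl⟩)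
  let u' : ι → M := fun i => ⟨u i, hu i⟩
  let w' : ι → M := fun i => ⟨w i, hw i⟩
  let S : M →ₗ[ℂ] M :=
    { toFun := fun z =>
        ∑ i, (((2⁻¹ : ℂ) * ⟪w' i, z⟫_ℂ) • u' i + ((2⁻¹ : ℂ) * ⟪u' i, z⟫_ℂ) • w' i)
      map_add' := by
        intro a b
        simp only [inner_add_right, mul_add, add_smul]
        rw [← Finset.sum_add_distrib]
        refine Finset.sum_congr rfl fun i _ => ?_
        abel
      map_smul' := by
        intro c a
        simp only [inner_smul_right, RingHom.id_apply]
        rw [Finset.smul_sum]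
        refine Finset.sum_congr rfl fun i _ => ?_
        rw [smul_add, smul_smul, smul_smul]
        ring_nf }
  have hS : S.IsSymmetric := by
    intro a b
    show ⟪∑ i, _, b⟫_ℂ = ⟪a, ∑ i, _⟫_ℂ
    rw [sum_inner, inner_sum]
    refine Finset.sum_congr rfl fun i _ => ?_
    simp only [inner_add_left, inner_add_right, inner_smul_left, inner_smul_right, map_mul,
      inner_conj_symm, map_inv₀, map_ofNat]
    ring
  set m := Module.finrank ℂ M with hm
  let e0 : OrthonormalBasis (Fin m) ℂ M := hS.eigenvectorBasis rfl
  let μ : Fin m → ℝ := hS.eigenvalues rfl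
  have heig : ∀ k, S (e0 k) = (μ k : ℂ) • e0 k := fun k => hS.apply_eigenvectorBasis rfl k
  let e : Fin m → H := fun k => (e0 k : H)
  have hnorm : ∀ k, ‖e k‖ = 1 := fun k => by
    have := e0.orthonormal.1 k
    exact this
  have horthon : Orthonormal ℂ e := by
    rw [orthonormal_iff_ite]
    intro i j
    have := orthonormal_iff_ite.1 e0.orthonormal i j
    rwa [Submodule.coe_inner] at this
  have horth : ∀ (z : M) (y : H), ⟪(z : H), y⟫_ℂ = ⟪z, M.orthogonalProjectionOnto y⟫_ℂ := by
    intro z y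
    have h0 : ⟪(z : H), y - (M.orthogonalProjectionOnto y : H)⟫_ℂ = 0 :=
      (Submodule.mem_orthogonal M _).1 (Submodule.sub_starProjection_mem_orthogonal y) (z : H) z.2
    have : ⟪(z : H), y⟫_ℂ = ⟪(z : H), (M.orthogonalProjectionOnto y : H)⟫_ℂ := by
      have hsplit := inner_sub_right (𝕜 := ℂ) (z : H) y (M.orthogonalProjectionOnto y : H)
      rw [h0] at hsplit
      exact sub_eq_zero.mp hsplit.symm
    rw [this, Submodule.coe_inner]
  have hkey : ∀ (a : H) (ha : a ∈ M) (y : H),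
      ∑ k, ⟪a, e k⟫_ℂ * ⟪e k, y⟫_ℂ = ⟪a, y⟫_ℂ := by
    intro a ha y
    have h1 : ∀ k, ⟪e k, y⟫_ℂ = ⟪e0 k, M.orthogonalProjectionOnto y⟫_ℂ := fun k => horth (e0 k) y
    have h2 : ∀ k, ⟪a, e k⟫_ℂ = ⟪(⟨a, ha⟩ : M), e0 k⟫_ℂ := fun k => by
      rw [Submodule.coe_inner]
    calc ∑ k, ⟪a, e k⟫_ℂ * ⟪e k, y⟫_ℂ
        = ∑ k, ⟪(⟨a, ha⟩ : M), e0 k⟫_ℂ * ⟪e0 k, M.orthogonalProjectionOnto y⟫_ℂ :=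
          Finset.sum_congr rfl fun k _ => by rw [h1 k, h2 k]
      _ = ⟪(⟨a, ha⟩ : M), M.orthogonalProjectionOnto y⟫_ℂ :=
          e0.sum_inner_mul_inner _ _
      _ = ⟪a, y⟫_ℂ := (horth ⟨a, ha⟩ y).symm
  have hexp : ∀ k, ((S (e0 k) : M) : H) =
      ∑ i, (((2⁻¹ : ℂ) * ⟪w i, e k⟫_ℂ) • u i + ((2⁻¹ : ℂ) * ⟪u i, e k⟫_ℂ) • w i) := by
    intro k
    show ((∑ i, _ : M) : H) = _
    rw [Submodule.coe_sum]
    refine Finset.sum_congr rfl fun i _ => ?_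
    rw [Submodule.coe_add, Submodule.coe_smul, Submodule.coe_smul]
    rw [Submodule.coe_inner, Submodule.coe_inner]
  have hmid : ∀ (T : H →L[ℂ] H) k, ⟪e k, T ((S (e0 k) : M) : H)⟫_ℂ =
      ∑ i, ((2⁻¹ : ℂ) * (⟪w i, e k⟫_ℂ * ⟪e k, T (u i)⟫_ℂ)
          + (2⁻¹ : ℂ) * (⟪u i, e k⟫_ℂ * ⟪e k, T (w i)⟫_ℂ)) := by
    intro T k
    rw [hexp k, map_sum, inner_sum]
    refine Finset.sum_congr rfl fun i _ => ?_
    rw [map_add, map_smul, map_smul, inner_add_right, inner_smul_right, inner_smul_right]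
    ring
  have hway1 : ∀ (T : H →L[ℂ] H) k, re ⟪e k, T ((S (e0 k) : M) : H)⟫_ℂ
      = μ k * re ⟪e k, T (e k)⟫_ℂ := by
    intro T k
    rw [heig k]
    have : (((μ k : ℂ) • e0 k : M) : H) = (μ k : ℂ) • e k := rfl
    rw [this, map_smul, inner_smul_right, re_ofReal_mul']
  have hsum : ∀ T : H →L[ℂ] H, ∑ k, ⟪e k, T ((S (e0 k) : M) : H)⟫_ℂ
      = ∑ i, ((2⁻¹ : ℂ) * ⟪w i, T (u i)⟫_ℂ + (2⁻¹ : ℂ) * ⟪u i, T (w i)⟫_ℂ) := by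
    intro T
    calc ∑ k, ⟪e k, T ((S (e0 k) : M) : H)⟫_ℂ
        = ∑ k, ∑ i, ((2⁻¹ : ℂ) * (⟪w i, e k⟫_ℂ * ⟪e k, T (u i)⟫_ℂ)
            + (2⁻¹ : ℂ) * (⟪u i, e k⟫_ℂ * ⟪e k, T (w i)⟫_ℂ)) :=
          Finset.sum_congr rfl fun k _ => hmid T k
      _ = ∑ i, ∑ k, ((2⁻¹ : ℂ) * (⟪w i, e k⟫_ℂ * ⟪e k, T (u i)⟫_ℂ)
            + (2⁻¹ : ℂ) * (⟪u i, e k⟫_ℂ * ⟪e k, T (w i)⟫_ℂ)) := Finset.sum_comm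
      _ = ∑ i, ((2⁻¹ : ℂ) * ⟪w i, T (u i)⟫_ℂ + (2⁻¹ : ℂ) * ⟪u i, T (w i)⟫_ℂ) := by
          refine Finset.sum_congr rfl fun i _ => ?_
          rw [Finset.sum_add_distrib, ← Finset.mul_sum, ← Finset.mul_sum,
            hkey (w i) (hw i) (T (u i)), hkey (u i) (hu i) (T (w i))]
  have hnn : ∀ k, 0 ≤ μ k := by
    intro k
    have h1 : re ⟪e k, (1 : H →L[ℂ] H) ((S (e0 k) : M) : H)⟫_ℂ = μ k := by
      rw [hway1 1 k, ContinuousLinearMap.one_apply]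
      have : re ⟪e k, e k⟫_ℂ = 1 := by
        rw [inner_self_eq_norm_sq, hnorm k]; norm_num
      rw [this, mul_one]
    have h2 : re ⟪e k, (1 : H →L[ℂ] H) ((S (e0 k) : M) : H)⟫_ℂ
        = ∑ i, re ⟪w i, (rkOne (e k) (e k)) (u i)⟫_ℂ := by
      rw [hmid 1 k, map_sum]
      refine Finset.sum_congr rfl fun i _ => ?_
      simp only [ContinuousLinearMap.one_apply]
      have hconj : ⟪u i, e k⟫_ℂ * ⟪e k, w i⟫_ℂ = conj (⟪w i, e k⟫_ℂ * ⟪e k, u i⟫_ℂ) := by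
        rw [map_mul, inner_conj_symm, inner_conj_symm]; ring
      rw [hconj, re_half_conj, rkOne_apply, inner_smul_right]
      ring_nf
    have h3 := hpos (rkOne (e k) (e k)) (isPositive_rkOne (e k))
    rw [← h1, h2]
    exact h3
  refine ⟨m, μ, e, hnn, horthon, ?_⟩
  intro T hT
  have hsym := ContinuousLinearMap.isSelfAdjoint_iff_isSymmetric.1 hT
  have h1 : ∑ k, re ⟪e k, T ((S (e0 k) : M) : H)⟫_ℂ = ∑ k, μ k * re ⟪e k, T (e k)⟫_ℂ :=
    Finset.sum_congr rfl fun k _ => hway1 T k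
  have h2 : ∑ k, re ⟪e k, T ((S (e0 k) : M) : H)⟫_ℂ = ∑ i, re ⟪w i, T (u i)⟫_ℂ := by
    rw [← map_sum, hsum T, map_sum]
    refine Finset.sum_congr rfl fun i _ => ?_
    have hz : ⟪u i, T (w i)⟫_ℂ = conj ⟪w i, T (u i)⟫_ℂ := by
      have h := hsym (u i) (w i)
      simp only [ContinuousLinearMap.coe_coe] at h
      rw [← h, inner_conj_symm]
    rw [hz, re_half_conj]
  rw [← h2, h1]

/-- A WOT-continuous real functional bounded below on `C⁺` attains its minimum there. -/
lemma exists_min (C : Set (Submodule ℂ H)) (hCclosed : ∀ V ∈ C, IsClosed (V : Set H))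
    (hmsap : MSAP C) (φ : (H →WOT[ℂ] H) →ₗ[ℝ] ℝ) (hφ : Continuous φ) (c : ℝ)
    (hlb : ∀ z ∈ (ContinuousLinearMapWOT.ofCLM : (H →L[ℂ] H) → H →WOT[ℂ] H) '' plusPos (projQ '' C), c ≤ φ z) :
    ∃ z₀ ∈ (ContinuousLinearMapWOT.ofCLM : (H →L[ℂ] H) → H →WOT[ℂ] H) '' plusPos (projQ '' C),
      ∀ z ∈ (ContinuousLinearMapWOT.ofCLM : (H →L[ℂ] H) → H →WOT[ℂ] H) '' plusPos (projQ '' C), φ z₀ ≤ φ z := by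
  classical
  obtain ⟨n, u, w, hrep⟩ := exists_inner_repr φ hφ
  have hrep' : ∀ T : H →L[ℂ] H, φ ((ContinuousLinearMapWOT.ofCLM : (H →L[ℂ] H) → H →WOT[ℂ] H) T)
      = ∑ i, re ⟪w i, T (u i)⟫_ℂ := by
    intro T
    rw [hrep]
    refine Finset.sum_congr rfl fun i _ => ?_
    rw [ContinuousLinearMapWOT.ofCLM_apply]
  obtain ⟨V₀, hV₀, -⟩ := hmsap ∅
  have hmemQ : ∀ V ∈ C, ∀ N : H →L[ℂ] H, N.IsPositive →
      (ContinuousLinearMapWOT.ofCLM : (H →L[ℂ] H) → H →WOT[ℂ] H) (projQ V + N) ∈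
        (ContinuousLinearMapWOT.ofCLM : (H →L[ℂ] H) → H →WOT[ℂ] H) '' plusPos (projQ '' C) :=
    fun V hV N hN => ⟨projQ V + N, ⟨projQ V, ⟨V, hV, rfl⟩, N, hN, rfl⟩, rfl⟩
  have hpos : ∀ N : H →L[ℂ] H, N.IsPositive → 0 ≤ ∑ i, re ⟪w i, N (u i)⟫_ℂ := by
    intro N hN
    set A := ∑ i, re ⟪w i, (projQ V₀) (u i)⟫_ℂ with hA
    set B := ∑ i, re ⟪w i, N (u i)⟫_ℂ with hB
    have hAB : ∀ t : ℝ, 0 ≤ t → c ≤ A + t * B := by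
      intro t ht
      have h1 := hlb _ (hmemQ V₀ hV₀ ((t : ℂ) • N) (isPositive_smul_nonneg ht hN))
      rw [hrep'] at h1
      have h2 : ∑ i, re ⟪w i, (projQ V₀ + (t : ℂ) • N) (u i)⟫_ℂ = A + t * B := by
        rw [hA, hB, Finset.mul_sum, ← Finset.sum_add_distrib]
        refine Finset.sum_congr rfl fun i _ => ?_
        rw [ContinuousLinearMap.add_apply, inner_add_right, map_add,
          ContinuousLinearMap.smul_apply, inner_smul_right, re_ofReal_mul']
      rw [h2] at h1
      exact h1
    by_contra hcon
    push_neg at hcon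
    have hc0 : c ≤ A := by simpa using hAB 0 le_rfl
    have ht : 0 ≤ (c - A - 1) / B :=
      div_nonneg_of_nonpos (by linarith) (le_of_lt hcon)
    have := hAB _ ht
    rw [div_mul_cancel₀ _ (ne_of_lt hcon)] at this
    linarith
  obtain ⟨m, μ, e, hμ, he, hdiag⟩ := exists_diag u w hpos
  have hterm : ∀ (V : Submodule ℂ H), V ∈ C → ∀ k,
      infDist (Real.sqrt (μ k) • e k) (V : Set H) ^ 2
        = μ k * infDist (e k) (V : Set H) ^ 2 := by
    intro V hV k
    rw [← re_inner_projQ V (hCclosed V hV), ← re_inner_projQ V (hCclosed V hV)]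
    have hs : ∀ y : H, Real.sqrt (μ k) • y = ((Real.sqrt (μ k) : ℂ)) • y := fun y => by
      rw [← smul_one_smul ℂ (Real.sqrt (μ k)) y, Complex.real_smul, mul_one]
    rw [hs, map_smul, inner_smul_left, inner_smul_right, Complex.conj_ofReal, ← mul_assoc,
      ← Complex.ofReal_mul, Real.mul_self_sqrt (hμ k), re_ofReal_mul']
  set F := (Finset.univ.filter fun k => 0 < μ k).image (fun k => Real.sqrt (μ k) • e k) with hF
  have hinj : ∀ k ∈ (Finset.univ.filter fun k => 0 < μ k),
      ∀ l ∈ (Finset.univ.filter fun k => 0 < μ k),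
      Real.sqrt (μ k) • e k = Real.sqrt (μ l) • e l → k = l := by
    intro k hk l hl hkl
    rw [Finset.mem_filter] at hk hl
    have hek : ‖e k‖ = 1 := he.1 k
    have hel : ‖e l‖ = 1 := he.1 l
    have hnk : ‖Real.sqrt (μ k) • e k‖ = Real.sqrt (μ k) := by
      rw [norm_smul, hek, mul_one, Real.norm_eq_abs, abs_of_nonneg (Real.sqrt_nonneg _)]
    have hnl : ‖Real.sqrt (μ l) • e l‖ = Real.sqrt (μ l) := by
      rw [norm_smul, hel, mul_one, Real.norm_eq_abs, abs_of_nonneg (Real.sqrt_nonneg _)]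
    have hss : Real.sqrt (μ k) = Real.sqrt (μ l) := by rw [← hnk, ← hnl, hkl]
    have hsk : Real.sqrt (μ k) ≠ 0 := ne_of_gt (Real.sqrt_pos.2 hk.2)
    have heq : e k = e l := by
      have : Real.sqrt (μ k) • e k = Real.sqrt (μ k) • e l := by rw [hkl, hss]
      exact smul_right_injective H hsk this
    exact he.linearIndependent.injective heq
  have hFsum : ∀ V ∈ C, (∑ f ∈ F, infDist f (V : Set H) ^ 2)
      = ∑ k, μ k * infDist (e k) (V : Set H) ^ 2 := by
    intro V hV
    rw [hF, Finset.sum_image hinj]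
    rw [Finset.sum_filter]
    refine Finset.sum_congr rfl fun k _ => ?_
    by_cases hk : 0 < μ k
    · rw [if_pos hk, hterm V hV k]
    · rw [if_neg hk]
      have : μ k = 0 := le_antisymm (not_lt.1 hk) (hμ k)
      rw [this, zero_mul]
  have hQV : ∀ V ∈ C, φ ((ContinuousLinearMapWOT.ofCLM : (H →L[ℂ] H) → H →WOT[ℂ] H) (projQ V))
      = ∑ f ∈ F, infDist f (V : Set H) ^ 2 := by
    intro V hV
    rw [hrep', hdiag (projQ V) (projQ_isPositive V).isSelfAdjoint, hFsum V hV]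
    refine Finset.sum_congr rfl fun k _ => ?_
    rw [re_inner_projQ V (hCclosed V hV)]
  obtain ⟨V₁, hV₁, hopt⟩ := hmsap F
  have hbdd : BddBelow (Set.range fun W : C =>
      ∑ f ∈ F, infDist f ((W : Submodule ℂ H) : Set H) ^ 2) := by
    refine ⟨0, ?_⟩
    rintro x ⟨W, rfl⟩
    positivity
  refine ⟨(ContinuousLinearMapWOT.ofCLM : (H →L[ℂ] H) → H →WOT[ℂ] H) (projQ V₁ + 0),
    hmemQ V₁ hV₁ 0 ContinuousLinearMap.isPositive_zero, ?_⟩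
  rintro z ⟨T, ⟨Q, ⟨V, hV, rfl⟩, N, hN, rfl⟩, rfl⟩
  have hz₀ : φ ((ContinuousLinearMapWOT.ofCLM : (H →L[ℂ] H) → H →WOT[ℂ] H) (projQ V₁ + 0))
      = ∑ f ∈ F, infDist f (V₁ : Set H) ^ 2 := by
    rw [add_zero, hQV V₁ hV₁]
  rw [hz₀]
  have hsa : IsSelfAdjoint (projQ V + N) := (projQ_isPositive V).isSelfAdjoint.add hN.isSelfAdjoint
  have step1 : φ ((ContinuousLinearMapWOT.ofCLM : (H →L[ℂ] H) → H →WOT[ℂ] H) (projQ V + N))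
      = ∑ k, μ k * re ⟪e k, (projQ V + N) (e k)⟫_ℂ := by
    rw [hrep', hdiag _ hsa]
  have step2 : ∑ k, μ k * infDist (e k) (V : Set H) ^ 2
      ≤ ∑ k, μ k * re ⟪e k, (projQ V + N) (e k)⟫_ℂ := by
    refine Finset.sum_le_sum fun k _ => ?_
    rw [ContinuousLinearMap.add_apply, inner_add_right, map_add,
      re_inner_projQ V (hCclosed V hV)]
    have hNk : 0 ≤ re ⟪e k, N (e k)⟫_ℂ := hN.re_inner_nonneg_right (e k)
    have := hμ k
    nlinarith
  have step3 : (∑ f ∈ F, infDist f (V₁ : Set H) ^ 2) ≤ ∑ f ∈ F, infDist f (V : Set H) ^ 2 := by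
    rw [hopt]
    exact ciInf_le hbdd ⟨V, hV⟩
  calc (∑ f ∈ F, infDist f (V₁ : Set H) ^ 2)
      ≤ ∑ f ∈ F, infDist f (V : Set H) ^ 2 := step3
    _ = ∑ k, μ k * infDist (e k) (V : Set H) ^ 2 := hFsum V hV
    _ ≤ ∑ k, μ k * re ⟪e k, (projQ V + N) (e k)⟫_ℂ := step2
    _ = φ ((ContinuousLinearMapWOT.ofCLM : (H →L[ℂ] H) → H →WOT[ℂ] H) (projQ V + N)) := step1.symm

-- ==================== end auxiliary material ====================

/-- If a family `C` of closed subspaces of a separable Hilbert space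
(identified with its projectors `Q_V = I - P_V`) has MSAP, then the contact hull of
`C⁺ = C + P⁺(H)` equals its closed convex hull in the weak operator topology. -/
theorem contactHull_eq_closedConvexHull_of_msap
    [TopologicalSpace.SeparableSpace H]
    (C : Set (Submodule ℂ H)) (hCclosed : ∀ V ∈ C, IsClosed (V : Set H))
    (hmsap : MSAP C) :
    contactHull ((ContinuousLinearMapWOT.ofCLM : (H →L[ℂ] H) → H →WOT[ℂ] H) '' plusPos (projQ '' C)) =
      closure (convexHull ℝ ((ContinuousLinearMapWOT.ofCLM : (H →L[ℂ] H) → H →WOT[ℂ] H) ''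
        plusPos (projQ '' C))) := by
  set E := (ContinuousLinearMapWOT.ofCLM : (H →L[ℂ] H) → H →WOT[ℂ] H) '' plusPos (projQ '' C) with hEdef
  apply Set.Subset.antisymm
  · -- contactHull ⊆ closed convex hull
    intro x hx
    by_contra hxD
    obtain ⟨f, uu, hfD, hfx⟩ := _root_.geometric_hahn_banach_closed_point
      (s := closure (convexHull ℝ E)) ((convex_convexHull ℝ E).closure) isClosed_closure hxD
    have hEsub : E ⊆ closure (convexHull ℝ E) :=
      (subset_convexHull ℝ E).trans subset_closure
    have hlb : ∀ z ∈ E, -uu ≤ (-f.toLinearMap) z := by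
      intro z hz
      have := hfD z (hEsub hz)
      simp only [LinearMap.neg_apply, ContinuousLinearMap.coe_coe]
      linarith
    have hcont : Continuous (-f.toLinearMap : (H →WOT[ℂ] H) →ₗ[ℝ] ℝ) := by
      have : ⇑(-f.toLinearMap : (H →WOT[ℂ] H) →ₗ[ℝ] ℝ) = fun z => -(f z) := rfl
      rw [this]
      exact f.continuous.neg
    obtain ⟨z₀, hz₀E, hz₀min⟩ := exists_min C hCclosed hmsap (-f.toLinearMap) hcont (-uu) hlb
    have hcontact : {y : H →WOT[ℂ] H | (-f.toLinearMap) z₀ ≤ (-f.toLinearMap) y} ∈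
        ContactHalfSpaces E := by
      refine ⟨-f.toLinearMap, (-f.toLinearMap) z₀, hcont, rfl, ?_, ⟨z₀, hz₀E, rfl⟩⟩
      intro z hz
      exact hz₀min z hz
    have hxS := hx _ hcontact
    have h1 : (-f.toLinearMap) z₀ ≤ (-f.toLinearMap) x := hxS
    have h2 : f z₀ < uu := hfD z₀ (hEsub hz₀E)
    simp only [LinearMap.neg_apply, ContinuousLinearMap.coe_coe] at h1
    linarith
  · -- closed convex hull ⊆ contactHull
    intro x hx S hS
    obtain ⟨φ, a, hcont, rfl, hES, -⟩ := hS
    have hclosed : IsClosed {y : H →WOT[ℂ] H | a ≤ φ y} := by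
      have : {y : H →WOT[ℂ] H | a ≤ φ y} = φ ⁻¹' (Set.Ici a) := rfl
      rw [this]
      exact (isClosed_Ici).preimage hcont
    have hconv : Convex ℝ {y : H →WOT[ℂ] H | a ≤ φ y} := convex_halfSpace_ge φ.isLinear a
    exact closure_minimal (convexHull_min hES hconv) hclosed hx


end
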